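/- For m ≥ 2, ω = e^{2πi/m}, and 1 ≤ j ≤ m−1, there exists a constant c₃ (depending only on m) such that for all n ≥ 1, |C_n(ω^j)| ≤ c₃ · C(2⌊n/v⌋ + 1, ⌊n/v⌋), where v = m/gcd(j,m) and C_n(q) is the q-Catalan polynomial. -/

import Mathlib

/-!
Here `ζ = ω ^ j` is a primitive `v`-th root of unity. Among the factors `[t]_q` of `[N]_q!`
exactly `⌊N/v⌋` vanish at `ζ`, namely those with `v ∣ t`, and `[v s]_q = [v]_q [s]_{q^v}` with
`[s]_{q^v} = s` at `ζ`; every other factor takes at `ζ` the value of `[t mod v]_q`. Hence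
`[N]_q! = [v]_q ^ ⌊N/v⌋ R_N` with `R_N(ζ) = ⌊N/v⌋! ([v-1]_ζ!) ^ ⌊N/v⌋ [N mod v]_ζ!`.
Writing `n = v a + b`, cancelling the powers of `[v]_q` in `C_n [n+1]_q [n]_q!² = [2n]_q!` and
evaluating at `ζ` shows that `C_n(ζ)` is `binom(2a, a)` or `binom(2a+1, a)` times a number
depending only on `b`, or `0` when `b + 1 < v ≤ 2b` (a factor `[v]_q` is left over on the right).
-/

open Finset Polynomial Complex

/-- The `q`-integer `[t]_q = 1 + q + ⋯ + q^{t-1}` as a complex polynomial. -/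
noncomputable def qInt (t : ℕ) : Polynomial ℂ :=
  ∑ i ∈ Finset.range t, Polynomial.X ^ i

/-- The `q`-factorial `[n]_q! = ∏_{t=1}^n [t]_q`. -/
noncomputable def qFact (n : ℕ) : Polynomial ℂ :=
  ∏ t ∈ Finset.Icc 1 n, qInt t

lemma qInt_succ (t : ℕ) : qInt (t + 1) = qInt t + X ^ t := by
  simp only [qInt, Finset.sum_range_succ]

lemma qInt_add (s t : ℕ) : qInt (s + t) = qInt s + X ^ s * qInt t := by
  simp only [qInt, Finset.sum_range_add, pow_add, Finset.mul_sum]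

lemma qInt_mul (v s : ℕ) : qInt (v * s) = qInt v * (qInt s).comp (X ^ v) := by
  induction s with
  | zero => simp [qInt]
  | succ s ih =>
    rw [Nat.mul_succ, qInt_add, ih, qInt_succ, add_comp, X_pow_comp, ← pow_mul]
    ring

lemma qInt_ne_zero {t : ℕ} (ht : t ≠ 0) : qInt t ≠ 0 := by
  intro h
  have : (qInt t).eval 1 = t := by simp [qInt, eval_finsetSum]
  simp [h, eq_comm, ht] at this

lemma qFact_succ (n : ℕ) : qFact (n + 1) = qFact n * qInt (n + 1) :=
  Finset.prod_Icc_succ_top (by omega) _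

namespace IsPrimitiveRoot

variable {ζ : ℂ} {v : ℕ} (hζ : IsPrimitiveRoot ζ v)
include hζ

lemma eval_qInt_comp_X_pow (s : ℕ) : ((qInt s).comp (X ^ v)).eval ζ = s := by
  simp [qInt, eval_finsetSum, hζ.pow_eq_one]

lemma eval_qInt_eq_zero_iff (hv : 1 < v) (t : ℕ) : (qInt t).eval ζ = 0 ↔ v ∣ t := by
  have hgeom : (qInt t).eval ζ * (ζ - 1) = ζ ^ t - 1 := by
    simpa [qInt, eval_finsetSum] using geom_sum_mul ζ t
  rw [← hζ.pow_eq_one_iff_dvd, ← sub_eq_zero (a := ζ ^ t), ← hgeom,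
    mul_eq_zero_iff_right (sub_ne_zero.mpr (hζ.ne_one hv))]

lemma eval_qInt_mul_add (hv : 1 < v) (a t : ℕ) :
    (qInt (v * a + t)).eval ζ = (qInt t).eval ζ := by
  simp [qInt_add, qInt_mul, pow_mul, hζ.pow_eq_one, (hζ.eval_qInt_eq_zero_iff hv v).2]

lemma eval_qFact_ne_zero (hv : 1 < v) {k : ℕ} (hk : k < v) : (qFact k).eval ζ ≠ 0 := by
  rw [qFact, eval_prod, Finset.prod_ne_zero_iff]
  intro t ht
  rw [Ne, hζ.eval_qInt_eq_zero_iff hv]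
  rw [Finset.mem_Icc] at ht
  exact Nat.not_dvd_of_pos_of_lt (by omega) (by omega)

theorem exists_qFact_mul_add_eq (hv : 1 < v) (a b : ℕ) (hb : b < v) :
    ∃ R : ℂ[X], qFact (v * a + b) = qInt v ^ a * R ∧
      R.eval ζ = a.factorial * (qFact (v - 1)).eval ζ ^ a * (qFact b).eval ζ := by
  suffices key : ∀ N a b, N = v * a + b → b < v → ∃ R : ℂ[X], qFact N = qInt v ^ a * R ∧
      R.eval ζ = a.factorial * (qFact (v - 1)).eval ζ ^ a * (qFact b).eval ζ from
    key _ a b rfl hb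
  intro N
  induction N with
  | zero =>
    intro a b h hb
    obtain ⟨hva, rfl⟩ := Nat.eq_zero_of_add_eq_zero h.symm
    obtain rfl := (mul_eq_zero.mp hva).resolve_left (by omega)
    exact ⟨1, by simp [qFact], by simp [qFact]⟩
  | succ N ih =>
    rintro a (_ | b) h hb
    · obtain ⟨a, rfl⟩ : ∃ a', a = a' + 1 :=
        Nat.exists_eq_add_one.mpr (Nat.pos_of_ne_zero (by rintro rfl; simp at h))
      obtain ⟨R, hR, hRζ⟩ := ih a (v - 1) (by rw [mul_add] at h; omega) (by omega)
      refine ⟨R * (qInt (a + 1)).comp (X ^ v), ?_, ?_⟩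
      · rw [qFact_succ, hR, h, add_zero, qInt_mul]
        ring
      · rw [eval_mul, hRζ, hζ.eval_qInt_comp_X_pow, Nat.factorial_succ]
        simp only [qFact, Finset.Icc_eq_empty_of_lt, zero_lt_one,
          Finset.prod_empty, eval_one]
        push_cast
        ring
    · obtain ⟨R, hR, hRζ⟩ := ih a b (by omega) (by omega)
      refine ⟨R * qInt (N + 1), ?_, ?_⟩
      · rw [qFact_succ, hR]
        ring
      · rw [eval_mul, hRζ, qFact_succ, eval_mul, h, hζ.eval_qInt_mul_add hv]
        ring

section

variable {C : ℂ[X]} {n : ℕ}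

theorem eval_qCatalan_of_dvd_succ (hv : 1 < v) {a : ℕ} (hn : n + 1 = v * (a + 1))
    (hC : C * (qInt (n + 1) * qFact n ^ 2) = qFact (2 * n)) :
    C.eval ζ = (2 * a + 1).choose a * ((qFact (v - 2)).eval ζ / (qFact (v - 1)).eval ζ) := by
  have hn' : n = v * a + (v - 1) := by rw [mul_add] at hn; omega
  have h2n : 2 * n = v * (2 * a + 1) + (v - 2) := by
    have : v * (2 * a + 1) = 2 * (v * a) + v := by ring
    omega
  obtain ⟨R₁, hR₁, hR₁ζ⟩ := hζ.exists_qFact_mul_add_eq hv a (v - 1) (by omega)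
  obtain ⟨R₂, hR₂, hR₂ζ⟩ := hζ.exists_qFact_mul_add_eq hv (2 * a + 1) (v - 2) (by omega)
  rw [hn, qInt_mul, h2n, hR₂, hn', hR₁] at hC
  have hcancel : C * ((qInt (a + 1)).comp (X ^ v) * R₁ ^ 2) = R₂ :=
    mul_left_cancel₀ (pow_ne_zero (2 * a + 1) (qInt_ne_zero (t := v) (by omega))) (by
      linear_combination hC)
  have hQ := hζ.eval_qFact_ne_zero hv (k := v - 1) (by omega)
  have hfact := Nat.add_choose_mul_factorial_mul_factorial (a + 1) a
  rw [show a + 1 + a = 2 * a + 1 by ring, Nat.factorial_succ] at hfact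
  have heval := congrArg (eval ζ) hcancel
  simp only [eval_mul, eval_pow, hζ.eval_qInt_comp_X_pow, hR₁ζ, hR₂ζ, ← hfact] at heval
  push_cast at heval
  have hne : ((a + 1 : ℂ) * a.factorial ^ 2 * (qFact (v - 1)).eval ζ ^ (2 * a + 1)) ≠ 0 := by
    have : (a.factorial : ℂ) ≠ 0 := by exact_mod_cast a.factorial_ne_zero
    have : (a + 1 : ℂ) ≠ 0 := by exact_mod_cast a.succ_ne_zero
    positivity
  field_simp
  apply mul_left_cancel₀ hne
  linear_combination heval

theorem eval_qCatalan_of_two_mul_lt (hv : 1 < v) {a b : ℕ} (hn : n = v * a + b)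
    (hb : 2 * b < v) (hC : C * (qInt (n + 1) * qFact n ^ 2) = qFact (2 * n)) :
    C.eval ζ = (2 * a).choose a *
      ((qFact (2 * b)).eval ζ / ((qInt (b + 1)).eval ζ * (qFact b).eval ζ ^ 2)) := by
  obtain ⟨R₁, hR₁, hR₁ζ⟩ := hζ.exists_qFact_mul_add_eq hv a b (by omega)
  obtain ⟨R₂, hR₂, hR₂ζ⟩ := hζ.exists_qFact_mul_add_eq hv (2 * a) (2 * b) hb
  rw [show 2 * n = v * (2 * a) + 2 * b by rw [hn]; ring, hR₂, hn, hR₁] at hC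
  have hcancel : C * (qInt (v * a + b + 1) * R₁ ^ 2) = R₂ :=
    mul_left_cancel₀ (pow_ne_zero (2 * a) (qInt_ne_zero (t := v) (by omega))) (by
      linear_combination hC)
  have hfact := Nat.add_choose_mul_factorial_mul_factorial a a
  rw [← two_mul] at hfact
  have heval := congrArg (eval ζ) hcancel
  simp only [eval_mul, eval_pow, add_assoc, hζ.eval_qInt_mul_add hv, hR₁ζ, hR₂ζ,
    ← hfact] at heval
  push_cast at heval
  have hne : ((a.factorial : ℂ) ^ 2 * (qFact (v - 1)).eval ζ ^ (2 * a)) ≠ 0 := by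
    have : (a.factorial : ℂ) ≠ 0 := by exact_mod_cast a.factorial_ne_zero
    have := hζ.eval_qFact_ne_zero hv (k := v - 1) (by omega)
    positivity
  have hW : (qInt (b + 1)).eval ζ ≠ 0 := by
    rw [Ne, hζ.eval_qInt_eq_zero_iff hv]
    exact Nat.not_dvd_of_pos_of_lt (by omega) (by omega)
  have hP := hζ.eval_qFact_ne_zero hv (k := b) (by omega)
  field_simp
  apply mul_left_cancel₀ hne
  linear_combination heval

theorem eval_qCatalan_eq_zero_of_le_two_mul (hv : 1 < v) {a b : ℕ} (hn : n = v * a + b)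
    (hb₁ : b + 1 < v) (hb₂ : v ≤ 2 * b)
    (hC : C * (qInt (n + 1) * qFact n ^ 2) = qFact (2 * n)) :
    C.eval ζ = 0 := by
  obtain ⟨R₁, hR₁, hR₁ζ⟩ := hζ.exists_qFact_mul_add_eq hv a b (by omega)
  obtain ⟨R₂, hR₂, -⟩ := hζ.exists_qFact_mul_add_eq hv (2 * a + 1) (2 * b - v) (by omega)
  have h2n : 2 * n = v * (2 * a + 1) + (2 * b - v) := by
    have : v * (2 * a + 1) = 2 * (v * a) + v := by ring
    omega
  rw [h2n, hR₂, hn, hR₁] at hC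
  have hcancel : C * (qInt (v * a + b + 1) * R₁ ^ 2) = qInt v * R₂ :=
    mul_left_cancel₀ (pow_ne_zero (2 * a) (qInt_ne_zero (t := v) (by omega))) (by
      linear_combination hC)
  have hR₁ne : R₁.eval ζ ≠ 0 := by
    have : (a.factorial : ℂ) ≠ 0 := by exact_mod_cast a.factorial_ne_zero
    have := hζ.eval_qFact_ne_zero hv (k := v - 1) (by omega)
    have := hζ.eval_qFact_ne_zero hv (k := b) (by omega)
    rw [hR₁ζ]
    positivity
  have hW : ¬ v ∣ b + 1 := Nat.not_dvd_of_pos_of_lt (by omega) hb₁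
  have heval := congrArg (eval ζ) hcancel
  simpa [add_assoc, hζ.eval_qInt_mul_add hv, (hζ.eval_qInt_eq_zero_iff hv v).2 dvd_rfl,
    hζ.eval_qInt_eq_zero_iff hv, hW, hR₁ne] using heval

end

theorem exists_norm_eval_qCatalan_le (hv : 1 < v) {C : ℕ → ℂ[X]}
    (hC : ∀ n, C n * (qInt (n + 1) * qFact n ^ 2) = qFact (2 * n)) :
    ∃ c : ℝ, ∀ n, ‖(C n).eval ζ‖ ≤ c * ((2 * (n / v) + 1).choose (n / v) : ℝ) := by
  set κ : ℕ → ℂ := fun b ↦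
    (qFact (2 * b)).eval ζ / ((qInt (b + 1)).eval ζ * (qFact b).eval ζ ^ 2)
  set κ' : ℂ := (qFact (v - 2)).eval ζ / (qFact (v - 1)).eval ζ
  set c := ‖κ'‖ + ∑ b ∈ Finset.range v, ‖κ b‖
  refine ⟨c, fun n ↦ ?_⟩
  have hn : n = v * (n / v) + n % v := (Nat.div_add_mod n v).symm
  have hb : n % v < v := Nat.mod_lt n (by omega)
  set a := n / v
  set b := n % v
  clear_value a b
  by_cases hb₁ : b + 1 = v
  · calc ‖(C n).eval ζ‖ = ‖κ'‖ * (2 * a + 1).choose a := by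
          rw [hζ.eval_qCatalan_of_dvd_succ hv (a := a) (by rw [mul_add, mul_one]; omega)
              (hC n), norm_mul, Complex.norm_natCast, mul_comm]
      _ ≤ c * (2 * a + 1).choose a := by
          gcongr
          exact le_add_of_nonneg_right (Finset.sum_nonneg fun _ _ ↦ norm_nonneg _)
  by_cases hb₂ : 2 * b < v
  · calc ‖(C n).eval ζ‖ = ‖κ b‖ * (2 * a).choose a := by
          rw [hζ.eval_qCatalan_of_two_mul_lt hv hn hb₂ (hC n), norm_mul,
            Complex.norm_natCast, mul_comm]
      _ ≤ c * (2 * a + 1).choose a := by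
          gcongr
          · calc ‖κ b‖ ≤ ∑ b ∈ Finset.range v, ‖κ b‖ :=
                  Finset.single_le_sum (fun _ _ ↦ norm_nonneg _) (Finset.mem_range.mpr hb)
              _ ≤ c := le_add_of_nonneg_left (norm_nonneg _)
          · omega
  · rw [hζ.eval_qCatalan_eq_zero_of_le_two_mul hv hn (by omega) (by omega) (hC n), norm_zero]
    positivity

end IsPrimitiveRoot

theorem stmt_17_general (m : ℕ)
    (ω : ℂ) (hω : ω = Complex.exp (2 * Real.pi * Complex.I / m))
    (j : ℕ) (hj1 : 1 ≤ j) (hj2 : j ≤ m - 1)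
    (v : ℕ) (hv : v = m / Nat.gcd j m)
    (C : ℕ → Polynomial ℂ)
    (hC : ∀ n, C n * (qInt (n + 1) * (qFact n) ^ 2) = qFact (2 * n)) :
    ∃ c₃ : ℝ, ∀ n : ℕ, 1 ≤ n →
      ‖(C n).eval (ω ^ j)‖ ≤
        c₃ * (Nat.choose (2 * (n / v) + 1) (n / v) : ℝ) := by
  have hωm : IsPrimitiveRoot ω m := hω ▸ Complex.isPrimitiveRoot_exp m (by omega)
  have hζ : IsPrimitiveRoot (ω ^ j) v := by
    rw [IsPrimitiveRoot.iff_orderOf, orderOf_pow' _ (by omega), ← hωm.eq_orderOf, hv,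
      Nat.gcd_comm]
  have hv₁ : 1 < v := by
    have hv₀ : v ≠ 0 := by
      rw [hv]
      exact (Nat.div_pos (Nat.gcd_le_right _ (by omega)) (Nat.gcd_pos_of_pos_left _ hj1)).ne'
    have hv_ne_one : v ≠ 1 := by
      rintro rfl
      have := Nat.le_of_dvd hj1 (hωm.dvd_of_pow_eq_one j (IsPrimitiveRoot.one_right_iff.mp hζ))
      omega
    omega
  obtain ⟨c, hc⟩ := hζ.exists_norm_eval_qCatalan_le hv₁ hC
  exact ⟨c, fun n _ ↦ hc n⟩

theorem stmt_17 (m : ℕ) (hm : 2 ≤ m)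
    (ω : ℂ) (hω : ω = Complex.exp (2 * Real.pi * Complex.I / m))
    (j : ℕ) (hj1 : 1 ≤ j) (hj2 : j ≤ m - 1)
    (v : ℕ) (hv : v = m / Nat.gcd j m)
    (C : ℕ → Polynomial ℂ)
    (hC : ∀ n, C n * (qInt (n + 1) * (qFact n) ^ 2) = qFact (2 * n)) :
    ∃ c₃ : ℝ, ∀ n : ℕ, 1 ≤ n →
      ‖(C n).eval (ω ^ j)‖ ≤
        c₃ * (Nat.choose (2 * (n / v) + 1) (n / v) : ℝ) :=
  stmt_17_general m ω hω j hj1 hj2 v hv C hC
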